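/- For every orientation G⃗ of a generalized corona P_n ⊙ pK_1 (n ≥ 1, p ≥ 1), 2 ≤ χρ(G⃗) ≤ 3; moreover χρ(G⃗) = 2 if and only if one part of the bipartition of P_n ⊙ pK_1 contains only sources or sinks in G⃗. -/

import Mathlib

open SimpleGraph

/-- A packing `k`-coloring of a graph: colors in `{1,…,k}`, and distinct vertices
with the same color `i` are at distance greater than `i`. -/
def IsPackingColoring {V : Type*} (G : SimpleGraph V) (k : ℕ) (c : V → ℕ) : Prop :=
  (∀ v, 1 ≤ c v ∧ c v ≤ k) ∧
  ∀ u v : V, u ≠ v → c u = c v → (c u : ℕ∞) < G.edist u v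

/-- The packing chromatic number. -/
noncomputable def packingChromaticNumber {V : Type*} (G : SimpleGraph V) : ℕ :=
  sInf {k | ∃ c, IsPackingColoring G k c}

/-- The generalized corona `G ⊙ pK₁`: add `p` pendant neighbors to each vertex. -/
def genCorona {V : Type*} (G : SimpleGraph V) (p : ℕ) : SimpleGraph (V ⊕ V × Fin p) where
  Adj x y :=
    (∃ u v, x = Sum.inl u ∧ y = Sum.inl v ∧ G.Adj u v) ∨
    (∃ u j, x = Sum.inl u ∧ y = Sum.inr (u, j)) ∨
    (∃ u j, x = Sum.inr (u, j) ∧ y = Sum.inl u)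
  symm := by
    refine ⟨?_⟩
    rintro x y (⟨u, v, rfl, rfl, h⟩ | ⟨u, j, rfl, rfl⟩ | ⟨u, j, rfl, rfl⟩)
    · exact Or.inl ⟨v, u, rfl, rfl, h.symm⟩
    · exact Or.inr (Or.inr ⟨u, j, rfl, rfl⟩)
    · exact Or.inr (Or.inl ⟨u, j, rfl, rfl⟩)
  loopless := by
    refine ⟨?_⟩
    rintro x (⟨u, v, rfl, h1, h⟩ | ⟨u, j, rfl, h1⟩ | ⟨u, j, rfl, h1⟩)
    · cases h1; exact G.loopless.irrefl u h
    · exact absurd h1 (by simp)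
    · exact absurd h1 (by simp)

/-- `A` is an orientation of `G`: each edge gets exactly one direction. -/
def IsOrientation {V : Type*} (G : SimpleGraph V) (A : V → V → Prop) : Prop :=
  (∀ u v, A u v → ¬ A v u) ∧ (∀ u v, G.Adj u v ↔ (A u v ∨ A v u))

/-- Existence of a directed path of length `n` from `u` to `v`. -/
def DPath {V : Type*} (A : V → V → Prop) : ℕ → V → V → Prop
  | 0, u, v => u = v
  | (n+1), u, v => ∃ w, A u w ∧ DPath A n w v

/-- The weak directed distance: length of a shortest directed path joining `u` and `v`
in either direction. -/
noncomputable def wdist {V : Type*} (A : V → V → Prop) (u v : V) : ℕ∞ :=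
  sInf {m : ℕ∞ | ∃ n : ℕ, m = n ∧ (DPath A n u v ∨ DPath A n v u)}

/-- A packing `k`-coloring of a digraph, w.r.t. the weak directed distance. -/
def IsDPackingColoring {V : Type*} (A : V → V → Prop) (k : ℕ) (c : V → ℕ) : Prop :=
  (∀ v, 1 ≤ c v ∧ c v ≤ k) ∧
  ∀ u v : V, u ≠ v → c u = c v → (c u : ℕ∞) < wdist A u v

/-- The packing chromatic number of a digraph. -/
noncomputable def dPackingChromaticNumber {V : Type*} (A : V → V → Prop) : ℕ :=
  sInf {k | ∃ c, IsDPackingColoring A k c}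

/-- A source: no incoming arcs. -/
def IsSource {V : Type*} (A : V → V → Prop) (v : V) : Prop := ∀ u, ¬ A u v

/-- A sink: no outgoing arcs. -/
def IsSink {V : Type*} (A : V → V → Prop) (v : V) : Prop := ∀ u, ¬ A v u

/-! If `h : V → ℤ` grows by one along every arc, every directed path from `u` to `v` has length
`h v - h u`. Colour the vertices with odd `h` by `1` and the others by `2` or `3` according to `h`
mod `4`: equal colours force `h u ≡ h v` mod `2`, resp. mod `4`, hence weak directed distance at
least `2`, resp. `4`. Every orientation of a tree, in particular of a path corona, has such a
grading, so `χρ ≤ 3`.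

Colour classes of a packing `2`-colouring are independent, so a `2`-colouring is a bipartition whose
class of colour `1` meets no directed `2`-path in its middle, i.e. consists of sources and sinks. -/

open Finset

variable {V : Type*}

section DirectedDistance

variable {A : V → V → Prop} {u v : V}

theorem wdist_le_of_dPath {m : ℕ} (h : DPath A m u v) : wdist A u v ≤ m :=
  sInf_le ⟨m, rfl, Or.inl h⟩

theorem lt_wdist_of_forall {k : ℕ} (h : ∀ m : ℕ, DPath A m u v ∨ DPath A m v u → k < m) :
    (k : ℕ∞) < wdist A u v := by
  have hle : ((k + 1 : ℕ) : ℕ∞) ≤ wdist A u v :=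
    le_sInf <| by rintro _ ⟨m, rfl, hm⟩; exact_mod_cast h m hm
  exact lt_of_lt_of_le (by exact_mod_cast k.lt_succ_self) hle

theorem IsDPackingColoring.lt_of_dPath {k m : ℕ} {c : V → ℕ} (hc : IsDPackingColoring A k c)
    (hne : u ≠ v) (hcol : c u = c v) (hp : DPath A m u v) : c u < m := by
  exact_mod_cast (hc.2 u v hne hcol).trans_le (wdist_le_of_dPath hp)

end DirectedDistance

def IsArcGrading (A : V → V → Prop) (h : V → ℤ) : Prop :=
  ∀ ⦃a b⦄, A a b → h b = h a + 1

theorem IsArcGrading.dPath_eq {A : V → V → Prop} {h : V → ℤ} (hh : IsArcGrading A h) :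
    ∀ {m : ℕ} {u v : V}, DPath A m u v → h v = h u + m
  | 0, _, _, rfl => by simp
  | m + 1, _, _, ⟨_, huw, hwv⟩ => by rw [hh.dPath_eq hwv, hh huw]; push_cast; ring

def gradingColor (h : V → ℤ) (v : V) : ℕ :=
  if h v % 2 = 1 then 1 else if h v % 4 = 0 then 2 else 3

theorem IsArcGrading.isDPackingColoring_gradingColor {A : V → V → Prop} {h : V → ℤ}
    (hh : IsArcGrading A h) : IsDPackingColoring A 3 (gradingColor h) := by
  refine ⟨fun v => by unfold gradingColor; split_ifs <;> omega,
    fun u v huv hcol => lt_wdist_of_forall fun m hm => ?_⟩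
  have hm0 : m ≠ 0 := by
    rintro rfl
    exact huv (hm.elim id Eq.symm)
  have hdiff : h v = h u + m ∨ h u = h v + m := hm.imp hh.dPath_eq hh.dPath_eq
  unfold gradingColor at hcol ⊢
  split_ifs at hcol ⊢ <;> omega

section Orientation

variable {G : SimpleGraph V} {A : V → V → Prop}

theorem IsOrientation.ne_of_arc (hA : IsOrientation G A) {u v : V} (h : A u v) : u ≠ v := by
  rintro rfl
  exact hA.1 u u h h

theorem IsDPackingColoring.ne_of_adj (hA : IsOrientation G A) {k : ℕ} {c : V → ℕ}
    (hc : IsDPackingColoring A k c) {u v : V} (h : G.Adj u v) : c u ≠ c v := by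
  intro hcol
  have hpos := (hc.1 u).1
  rcases (hA.2 u v).1 h with huv | hvu
  · have := hc.lt_of_dPath (hA.ne_of_arc huv) hcol (m := 1) ⟨v, huv, rfl⟩
    omega
  · have := hc.lt_of_dPath (hA.ne_of_arc hvu) hcol.symm (m := 1) ⟨u, hvu, rfl⟩
    omega

theorem IsDPackingColoring.two_le (hA : IsOrientation G A) {k : ℕ} {c : V → ℕ}
    (hc : IsDPackingColoring A k c) {u v : V} (h : G.Adj u v) : 2 ≤ k := by
  have := hc.ne_of_adj hA h
  have := hc.1 u
  have := hc.1 v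
  omega

theorem IsDPackingColoring.eq_one_iff_of_adj (hA : IsOrientation G A) {c : V → ℕ}
    (hc : IsDPackingColoring A 2 c) {u v : V} (h : G.Adj u v) : c u = 1 ↔ c v ≠ 1 := by
  have := hc.ne_of_adj hA h
  have := hc.1 u
  have := hc.1 v
  omega

theorem IsDPackingColoring.isSource_or_isSink (hA : IsOrientation G A) {c : V → ℕ}
    (hc : IsDPackingColoring A 2 c) {w : V} (hw : c w = 1) : IsSource A w ∨ IsSink A w := by
  by_contra! hmid
  obtain ⟨⟨u, huw⟩, ⟨v, hwv⟩⟩ : (∃ u, A u w) ∧ ∃ v, A w v := by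
    simpa [IsSource, IsSink] using hmid
  have hcu : c u ≠ 1 := fun hu => (hc.eq_one_iff_of_adj hA ((hA.2 u w).2 (.inl huw))).1 hu hw
  have hcv : c v ≠ 1 := (hc.eq_one_iff_of_adj hA ((hA.2 w v).2 (.inl hwv))).1 hw
  have hne : u ≠ v := by
    rintro rfl
    exact hA.1 u w huw hwv
  have := hc.1 u
  have := hc.1 v
  have := hc.lt_of_dPath hne (by omega) (m := 2) ⟨w, huw, v, hwv, rfl⟩
  omega

theorem isDPackingColoring_two_of_isSource_or_isSink (hA : IsOrientation G A) {s : Set V}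
    [DecidablePred (· ∈ s)] (hs : ∀ u v, G.Adj u v → (u ∈ s ↔ v ∉ s))
    (hsrc : ∀ v ∈ s, IsSource A v ∨ IsSink A v) :
    IsDPackingColoring A 2 fun v => if v ∈ s then 1 else 2 := by
  have hclaim : ∀ a b, a ≠ b → (a ∈ s ↔ b ∈ s) → ∀ m, DPath A m a b →
      (if a ∈ s then 1 else 2) < m := by
    intro a b hab hs_ab m hp
    obtain _ | _ | _ | m := m
    · exact absurd hp hab
    · obtain ⟨_, harc, rfl⟩ := hp
      have := hs a _ ((hA.2 a _).2 (.inl harc))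
      tauto
    · obtain ⟨w, haw, _, hwb, rfl⟩ := hp
      split_ifs with ha
      · omega
      have hw : w ∈ s := by
        have := hs a w ((hA.2 a w).2 (.inl haw))
        tauto
      exact ((hsrc w hw).elim (· a haw) (· _ hwb)).elim
    · split_ifs <;> omega
  refine ⟨fun v => by dsimp only; split_ifs <;> omega,
    fun u v huv hcol => lt_wdist_of_forall fun m hm => ?_⟩
  have hs_uv : u ∈ s ↔ v ∈ s := by
    dsimp only at hcol
    split_ifs at hcol <;> tauto
  rcases hm with hp | hp
  · exact hclaim u v huv hs_uv m hp
  · simpa only [← hcol] using hclaim v u huv.symm hs_uv.symm m hp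

theorem exists_isDPackingColoring_two_iff (hA : IsOrientation G A) :
    (∃ c, IsDPackingColoring A 2 c) ↔
      ∃ s : Set V, (∀ u v, G.Adj u v → (u ∈ s ↔ v ∉ s)) ∧
        ∀ v ∈ s, IsSource A v ∨ IsSink A v := by
  classical
  constructor
  · rintro ⟨c, hc⟩
    exact ⟨{v | c v = 1}, fun _ _ => hc.eq_one_iff_of_adj hA, fun _ => hc.isSource_or_isSink hA⟩
  · rintro ⟨s, hs, hsrc⟩
    exact ⟨_, isDPackingColoring_two_of_isSource_or_isSink hA hs hsrc⟩

end Orientation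

section Corona

variable {G : SimpleGraph V} {p : ℕ} {A : V ⊕ V × Fin p → V ⊕ V × Fin p → Prop}

theorem genCorona_adj_inl_inl {u v : V} :
    (genCorona G p).Adj (.inl u) (.inl v) ↔ G.Adj u v := by
  simp [genCorona]

theorem IsOrientation.genCorona_inl (hA : IsOrientation (genCorona G p) A) :
    IsOrientation G fun u v => A (.inl u) (.inl v) :=
  ⟨fun _ _ => hA.1 _ _, fun _ _ => genCorona_adj_inl_inl.symm.trans (hA.2 _ _)⟩

theorem IsOrientation.exists_isArcGrading_genCorona (hA : IsOrientation (genCorona G p) A)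
    {h₀ : V → ℤ} (h₀_grading : IsArcGrading (fun u v => A (.inl u) (.inl v)) h₀) :
    ∃ h, IsArcGrading A h := by
  classical
  refine ⟨Sum.elim h₀ fun x => if A (.inl x.1) (.inr x) then h₀ x.1 + 1 else h₀ x.1 - 1,
    fun a b hab => ?_⟩
  rcases (hA.2 a b).2 (Or.inl hab) with ⟨_, _, rfl, rfl, -⟩ | ⟨_, _, rfl, rfl⟩ | ⟨_, _, rfl, rfl⟩
  · exact h₀_grading hab
  · simp [hab]
  · simp [hA.1 _ _ hab]

end Corona

theorem IsOrientation.exists_isArcGrading_pathGraph {n : ℕ} {B : Fin n → Fin n → Prop}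
    (hB : IsOrientation (pathGraph n) B) : ∃ h, IsArcGrading B h := by
  classical
  let forward (l : ℕ) : Prop := ∃ (hl : l < n) (hl' : l + 1 < n), B ⟨l, hl⟩ ⟨l + 1, hl'⟩
  refine ⟨fun i => ∑ l ∈ range i, if forward l then 1 else -1, fun i j hij => ?_⟩
  obtain ⟨i, hi⟩ := i
  obtain ⟨j, hj⟩ := j
  rcases pathGraph_adj.1 ((hB.2 _ _).2 (Or.inl hij)) with rfl | rfl
  · simp [sum_range_succ, forward, hi, hj, hij]
  · have hback : ¬ forward j := fun ⟨_, _, hji⟩ => hB.1 _ _ hji hij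
    simp [sum_range_succ, hback]

theorem dpacking_oriented_corona_path (n p : ℕ) (hn : 1 ≤ n) (hp : 1 ≤ p)
    (A : (Fin n ⊕ Fin n × Fin p) → (Fin n ⊕ Fin n × Fin p) → Prop)
    (hA : IsOrientation (genCorona (pathGraph n) p) A) :
    2 ≤ dPackingChromaticNumber A ∧ dPackingChromaticNumber A ≤ 3 ∧
    (dPackingChromaticNumber A = 2 ↔
      ∃ s : Set (Fin n ⊕ Fin n × Fin p),
        (∀ u v, (genCorona (pathGraph n) p).Adj u v → (u ∈ s ↔ v ∉ s)) ∧
        ∀ v ∈ s, IsSource A v ∨ IsSink A v) := by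
  obtain ⟨h₀, h₀_grading⟩ := hA.genCorona_inl.exists_isArcGrading_pathGraph
  obtain ⟨h, hh⟩ := hA.exists_isArcGrading_genCorona h₀_grading
  have h3 : 3 ∈ {k | ∃ c, IsDPackingColoring A k c} := ⟨_, hh.isDPackingColoring_gradingColor⟩
  have hmem : dPackingChromaticNumber A ∈ {k | ∃ c, IsDPackingColoring A k c} :=
    Nat.sInf_mem ⟨3, h3⟩
  have hedge : (genCorona (pathGraph n) p).Adj (.inl ⟨0, hn⟩) (.inr (⟨0, hn⟩, ⟨0, hp⟩)) :=
    .inr (.inl ⟨_, _, rfl, rfl⟩)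
  have two_le : ∀ k ∈ {k | ∃ c, IsDPackingColoring A k c}, 2 ≤ k :=
    fun _ ⟨_, hc⟩ => hc.two_le hA hedge
  refine ⟨two_le _ hmem, Nat.sInf_le h3, ?_⟩
  rw [← exists_isDPackingColoring_two_iff hA]
  exact ⟨fun h2 => h2 ▸ hmem, fun h2 => le_antisymm (Nat.sInf_le h2) (two_le _ hmem)⟩
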